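/- arXiv:1406.0530 — 4 statements merged into one kernel-verified Lean document; each statement's English description precedes it below -/
import Mathlib

section
/- The steering robustness of a bipartite state is bounded above by its generalized robustness of entanglement: for any bipartite state ρ_AB, R_steer^{A→B}(ρ_AB) ≤ R_g(ρ_AB), where R_steer^{A→B}(ρ_AB) = sup over measurement assemblages {M_{a|x}} on A of R({Tr_A((M_{a|x}⊗1)ρ_AB)}). -/
open Matrix BigOperators
open scoped ComplexOrder

/-- Unsteerable assemblage (deterministic decomposition). -/
def Unsteerable {A X : Type*} [Fintype A] [Fintype X] [DecidableEq A] [DecidableEq X] {n : ℕ}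
    (ρ : A → X → Matrix (Fin n) (Fin n) ℂ) : Prop :=
  ∃ σ : (X → A) → Matrix (Fin n) (Fin n) ℂ,
    (∀ f, (σ f).PosSemidef) ∧
    (∀ a x, ρ a x = ∑ f : X → A, if a = f x then σ f else 0)

/-- An assemblage: positive operators, reduced state independent of the input,
and normalized. -/
def IsAssemblage {A X : Type*} [Fintype A] {n : ℕ}
    (ρ : A → X → Matrix (Fin n) (Fin n) ℂ) : Prop :=
  (∀ a x, (ρ a x).PosSemidef) ∧
  (∀ x x', ∑ a, ρ a x = ∑ a, ρ a x') ∧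
  (∀ x, (∑ a, ρ a x).trace = 1)

/-- Steering robustness of an assemblage. -/
noncomputable def SteeringRobustness
    {A X : Type*} [Fintype A] [Fintype X] [DecidableEq A] [DecidableEq X] {n : ℕ}
    (ρ : A → X → Matrix (Fin n) (Fin n) ℂ) : ℝ :=
  sInf {t : ℝ | 0 ≤ t ∧ ∃ τ : A → X → Matrix (Fin n) (Fin n) ℂ, IsAssemblage τ ∧
    Unsteerable (fun a x => (((1 + t)⁻¹ : ℝ) : ℂ) • (ρ a x + ((t : ℝ) : ℂ) • τ a x))}

open Kronecker

/-- Partial trace over the first (A) factor of a bipartite matrix. -/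
noncomputable def ptraceA {dA dB : ℕ} (M : Matrix (Fin dA × Fin dB) (Fin dA × Fin dB) ℂ) :
    Matrix (Fin dB) (Fin dB) ℂ :=
  Matrix.of fun i j => ∑ a, M (a, i) (a, j)

/-- Separable bipartite operators. -/
def IsSeparableState {dA dB : ℕ} (ρ : Matrix (Fin dA × Fin dB) (Fin dA × Fin dB) ℂ) : Prop :=
  ∃ (k : ℕ) (w : Fin k → ℝ) (σA : Fin k → Matrix (Fin dA) (Fin dA) ℂ)
    (σB : Fin k → Matrix (Fin dB) (Fin dB) ℂ),
    (∀ l, 0 ≤ w l) ∧ (∑ l, w l = 1) ∧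
    (∀ l, (σA l).PosSemidef ∧ (σA l).trace = 1) ∧
    (∀ l, (σB l).PosSemidef ∧ (σB l).trace = 1) ∧
    ρ = ∑ l, ((w l : ℝ) : ℂ) • (σA l ⊗ₖ σB l)

/-- The assemblage induced on `B` by measuring `A`. -/
noncomputable def inducedAssemblage {dA dB nA nX : ℕ}
    (M : Fin nA → Fin nX → Matrix (Fin dA) (Fin dA) ℂ)
    (ρ : Matrix (Fin dA × Fin dB) (Fin dA × Fin dB) ℂ) :
    Fin nA → Fin nX → Matrix (Fin dB) (Fin dB) ℂ :=
  fun a x => ptraceA ((M a x ⊗ₖ (1 : Matrix (Fin dB) (Fin dB) ℂ)) * ρ)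

/-- The steering robustness of a bipartite state: the supremum, over measurement
assemblages on `A`, of the steering robustness of the induced assemblage on `B`. -/
noncomputable def Rsteer {dA dB : ℕ}
    (ρ : Matrix (Fin dA × Fin dB) (Fin dA × Fin dB) ℂ) : ℝ :=
  sSup {r : ℝ | ∃ (nA nX : ℕ) (M : Fin nA → Fin nX → Matrix (Fin dA) (Fin dA) ℂ),
    (∀ a x, (M a x).PosSemidef) ∧ (∀ x, ∑ a, M a x = 1) ∧
    r = SteeringRobustness (inducedAssemblage M ρ)}

/-- Generalized robustness of entanglement. -/
noncomputable def Rg {dA dB : ℕ}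
    (ρ : Matrix (Fin dA × Fin dB) (Fin dA × Fin dB) ℂ) : ℝ :=
  sInf {t : ℝ | 0 ≤ t ∧ ∃ τ : Matrix (Fin dA × Fin dB) (Fin dA × Fin dB) ℂ,
    τ.PosSemidef ∧ τ.trace = 1 ∧
    IsSeparableState ((((1 + t)⁻¹ : ℝ) : ℂ) • (ρ + ((t : ℝ) : ℂ) • τ))}

/-! If `(ρ + t τ) / (1 + t)` is separable, measuring `A` with any measurement assemblage induces an
unsteerable assemblage on `B`: a product term `σA ⊗ σB` steers `B` to `σB` with probabilities
`tr (M_{a|x} σA)`, and taking products of these over the inputs spreads them over deterministic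
strategies. As the induced assemblage is linear in the state and `τ` induces an assemblage, every
feasible `t` for `Rg ρ` is feasible for the steering robustness of every assemblage induced by `ρ`.
A feasible `t` exists because `ρ ≤ 1`: with `N = dA * dB`, mixing `ρ` with
`τ = (1 - ρ) / N + 1 / N²` at weight `t = N` gives the maximally mixed state. -/

namespace Matrix

variable {𝕜 n : Type*} [RCLike 𝕜] [Fintype n] [DecidableEq n]

open scoped MatrixOrder in
lemma PosSemidef.trace_mul_nonneg {A B : Matrix n n 𝕜} (hA : A.PosSemidef) (hB : B.PosSemidef) :
    0 ≤ (A * B).trace := by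
  obtain ⟨a, rfl⟩ := CStarAlgebra.nonneg_iff_eq_star_mul_self.mp hA.nonneg
  rw [mul_assoc, trace_mul_comm, star_eq_conjTranspose]
  exact (hB.mul_mul_conjTranspose_same a).trace_nonneg

open scoped MatrixOrder in
lemma PosSemidef.one_sub_of_trace_eq_one {P : Matrix n n 𝕜} (hP : P.PosSemidef)
    (htr : P.trace = 1) : (1 - P).PosSemidef := by
  rw [← nonneg_iff_posSemidef, sub_nonneg]
  refine CFC.le_one (R := ℝ) (fun x hx => ?_) hP.1.isSelfAdjoint
  obtain ⟨i, rfl⟩ := hP.1.spectrum_real_eq_range_eigenvalues ▸ hx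
  have hsum : ∑ j, hP.1.eigenvalues j = 1 := by
    have := hP.1.trace_eq_sum_eigenvalues
    rw [htr] at this
    exact_mod_cast this.symm
  rw [← hsum]
  exact Finset.single_le_sum (fun j _ => hP.eigenvalues_nonneg j) (Finset.mem_univ i)

end Matrix

lemma Fintype.sum_ite_eq_prod_of_sum_eq_one {X A R : Type*} [Fintype X] [Fintype A]
    [DecidableEq X] [DecidableEq A] [CommSemiring R] (q : X → A → R)
    (hq : ∀ x, ∑ a, q x a = 1) (x : X) (a : A) :
    ∑ f : X → A, (if a = f x then ∏ x', q x' (f x') else 0) = q x a := by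
  have hfilter : Finset.univ.filter (fun f : X → A => a = f x)
      = Fintype.piFinset fun x' => if x' = x then {a} else Finset.univ := by
    ext f
    simp only [Finset.mem_filter, Finset.mem_univ, true_and, Fintype.mem_piFinset]
    refine ⟨fun h x' => ?_, fun h => by simpa [eq_comm] using h x⟩
    split_ifs with hx <;> simp [hx, h]
  rw [← Finset.sum_filter, hfilter, ← Finset.prod_univ_sum]
  have hrow (x' : X) : ∑ b ∈ (if x' = x then {a} else Finset.univ), q x' b
      = if x' = x then q x a else 1 := by
    split_ifs with h <;> simp [h, hq]
  simp [hrow]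

section PartialTrace

variable {dA dB : ℕ}

lemma ptraceA_add (Z W : Matrix (Fin dA × Fin dB) (Fin dA × Fin dB) ℂ) :
    ptraceA (Z + W) = ptraceA Z + ptraceA W := by
  ext i j
  simp [ptraceA, Finset.sum_add_distrib]

lemma ptraceA_smul (c : ℂ) (Z : Matrix (Fin dA × Fin dB) (Fin dA × Fin dB) ℂ) :
    ptraceA (c • Z) = c • ptraceA Z := by
  ext i j
  simp [ptraceA, Finset.mul_sum]

lemma ptraceA_sum {ι : Type*} (s : Finset ι)
    (Z : ι → Matrix (Fin dA × Fin dB) (Fin dA × Fin dB) ℂ) :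
    ptraceA (∑ l ∈ s, Z l) = ∑ l ∈ s, ptraceA (Z l) := by
  ext i j
  simp only [ptraceA, Matrix.of_apply, Matrix.sum_apply]
  exact Finset.sum_comm

lemma trace_ptraceA (Z : Matrix (Fin dA × Fin dB) (Fin dA × Fin dB) ℂ) :
    (ptraceA Z).trace = Z.trace := by
  simp only [ptraceA, Matrix.trace, Matrix.diag, Matrix.of_apply, Fintype.sum_prod_type]
  exact Finset.sum_comm

lemma ptraceA_kronecker (X : Matrix (Fin dA) (Fin dA) ℂ) (Y : Matrix (Fin dB) (Fin dB) ℂ) :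
    ptraceA (X ⊗ₖ Y) = X.trace • Y := by
  ext i j
  simp [ptraceA, Matrix.trace, Finset.sum_mul]

lemma ptraceA_mul_kronecker_one_comm (Z : Matrix (Fin dA × Fin dB) (Fin dA × Fin dB) ℂ)
    (X : Matrix (Fin dA) (Fin dA) ℂ) :
    ptraceA (Z * (X ⊗ₖ (1 : Matrix (Fin dB) (Fin dB) ℂ)))
      = ptraceA ((X ⊗ₖ (1 : Matrix (Fin dB) (Fin dB) ℂ)) * Z) := by
  ext i j
  simp only [ptraceA, Matrix.of_apply, Matrix.mul_apply, kroneckerMap_apply, Matrix.one_apply,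
    Fintype.sum_prod_type, mul_ite, ite_mul, mul_one, mul_zero, zero_mul,
    Finset.sum_ite_eq, Finset.sum_ite_eq', Finset.mem_univ, if_true]
  rw [Finset.sum_comm]
  exact Finset.sum_congr rfl fun _ _ => Finset.sum_congr rfl fun _ _ => mul_comm _ _

lemma Matrix.PosSemidef.ptraceA {Z : Matrix (Fin dA × Fin dB) (Fin dA × Fin dB) ℂ}
    (hZ : Z.PosSemidef) : (_root_.ptraceA Z).PosSemidef := by
  have : _root_.ptraceA Z = ∑ a, Z.submatrix (fun i => (a, i)) (fun j => (a, j)) := by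
    ext i j
    simp [_root_.ptraceA, Matrix.sum_apply]
  exact this ▸ posSemidef_sum _ fun a _ => hZ.submatrix _

end PartialTrace

section InducedAssemblage

variable {dA dB nA nX : ℕ} {M : Fin nA → Fin nX → Matrix (Fin dA) (Fin dA) ℂ}

lemma inducedAssemblage_add (Z W : Matrix (Fin dA × Fin dB) (Fin dA × Fin dB) ℂ) (a x) :
    inducedAssemblage M (Z + W) a x = inducedAssemblage M Z a x + inducedAssemblage M W a x := by
  simp only [inducedAssemblage, Matrix.mul_add, ptraceA_add]

lemma inducedAssemblage_smul (c : ℂ) (Z : Matrix (Fin dA × Fin dB) (Fin dA × Fin dB) ℂ) (a x) :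
    inducedAssemblage M (c • Z) a x = c • inducedAssemblage M Z a x := by
  simp only [inducedAssemblage, Matrix.mul_smul, ptraceA_smul]

lemma inducedAssemblage_sum {ι : Type*} (s : Finset ι)
    (Z : ι → Matrix (Fin dA × Fin dB) (Fin dA × Fin dB) ℂ) (a x) :
    inducedAssemblage M (∑ l ∈ s, Z l) a x = ∑ l ∈ s, inducedAssemblage M (Z l) a x := by
  simp only [inducedAssemblage, Matrix.mul_sum, ptraceA_sum]

lemma inducedAssemblage_kronecker (X : Matrix (Fin dA) (Fin dA) ℂ)
    (Y : Matrix (Fin dB) (Fin dB) ℂ) (a x) :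
    inducedAssemblage M (X ⊗ₖ Y) a x = (M a x * X).trace • Y := by
  rw [inducedAssemblage, ← Matrix.mul_kronecker_mul, Matrix.one_mul, ptraceA_kronecker]

lemma sum_inducedAssemblage (hM : ∀ x, ∑ a, M a x = 1)
    (Z : Matrix (Fin dA × Fin dB) (Fin dA × Fin dB) ℂ) (x) :
    ∑ a, inducedAssemblage M Z a x = ptraceA Z := by
  have hsum : ∑ a, M a x ⊗ₖ (1 : Matrix (Fin dB) (Fin dB) ℂ) = 1 := by
    rw [← Matrix.one_kronecker_one, ← hM x]
    ext ⟨i, k⟩ ⟨j, l⟩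
    simp [Matrix.sum_apply, Finset.sum_mul]
  simp only [inducedAssemblage, ← ptraceA_sum, ← Finset.sum_mul, hsum, Matrix.one_mul]

open scoped MatrixOrder in
lemma posSemidef_inducedAssemblage {a x} (hM : (M a x).PosSemidef)
    {Z : Matrix (Fin dA × Fin dB) (Fin dA × Fin dB) ℂ} (hZ : Z.PosSemidef) :
    (inducedAssemblage M Z a x).PosSemidef := by
  obtain ⟨b, hb⟩ := CStarAlgebra.nonneg_iff_eq_star_mul_self.mp hM.nonneg
  have hconj : inducedAssemblage M Z a x
      = ptraceA ((b ⊗ₖ (1 : Matrix (Fin dB) (Fin dB) ℂ)) * Z * (b ⊗ₖ 1)ᴴ) := by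
    rw [Matrix.conjTranspose_kronecker, Matrix.conjTranspose_one, ptraceA_mul_kronecker_one_comm,
      ← Matrix.mul_assoc, ← Matrix.mul_kronecker_mul, Matrix.one_mul, ← star_eq_conjTranspose, ← hb,
      inducedAssemblage]
  exact hconj ▸ (hZ.mul_mul_conjTranspose_same _).ptraceA

lemma isAssemblage_inducedAssemblage (hMpsd : ∀ a x, (M a x).PosSemidef)
    (hMsum : ∀ x, ∑ a, M a x = 1) {τ : Matrix (Fin dA × Fin dB) (Fin dA × Fin dB) ℂ}
    (hτ : τ.PosSemidef) (htr : τ.trace = 1) : IsAssemblage (inducedAssemblage M τ) :=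
  ⟨fun a x => posSemidef_inducedAssemblage (hMpsd a x) hτ,
    fun x x' => by rw [sum_inducedAssemblage hMsum, sum_inducedAssemblage hMsum],
    fun x => by rw [sum_inducedAssemblage hMsum, trace_ptraceA, htr]⟩

end InducedAssemblage

lemma unsteerable_inducedAssemblage {dA dB nA nX : ℕ}
    {M : Fin nA → Fin nX → Matrix (Fin dA) (Fin dA) ℂ} (hMpsd : ∀ a x, (M a x).PosSemidef)
    (hMsum : ∀ x, ∑ a, M a x = 1) {S : Matrix (Fin dA × Fin dB) (Fin dA × Fin dB) ℂ}
    (hS : IsSeparableState S) : Unsteerable (inducedAssemblage M S) := by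
  obtain ⟨k, w, σA, σB, hw, -, hσA, hσB, rfl⟩ := hS
  set p : Fin k → Fin nX → Fin nA → ℂ := fun l x a => (M a x * σA l).trace
  have hp_sum (l x) : ∑ a, p l x a = 1 := by
    simp only [p, ← Matrix.trace_sum, ← Finset.sum_mul, hMsum, Matrix.one_mul, (hσA l).2]
  refine ⟨fun f => ∑ l, ((w l : ℝ) : ℂ) • (∏ x, p l x (f x)) • σB l, fun f => ?_, fun a x => ?_⟩
  · refine Matrix.posSemidef_sum _ fun l _ => ((hσB l).1.smul ?_).smul ?_
    · exact Finset.prod_nonneg fun x _ => (hMpsd _ x).trace_mul_nonneg (hσA l).1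
    · exact_mod_cast hw l
  · have hite (f : Fin nX → Fin nA) :
        (if a = f x then ∑ l, ((w l : ℝ) : ℂ) • (∏ x', p l x' (f x')) • σB l else 0)
          = ∑ l, ((w l : ℝ) : ℂ) • (if a = f x then ∏ x', p l x' (f x') else 0) • σB l := by
      split_ifs <;> simp
    simp_rw [hite, inducedAssemblage_sum, inducedAssemblage_smul, inducedAssemblage_kronecker]
    rw [Finset.sum_comm]
    simp_rw [← Finset.smul_sum, ← Finset.sum_smul,
      Fintype.sum_ite_eq_prod_of_sum_eq_one (p _) (hp_sum _)]
    rfl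

lemma isSeparableState_kronecker {dA dB : ℕ} {σA : Matrix (Fin dA) (Fin dA) ℂ}
    {σB : Matrix (Fin dB) (Fin dB) ℂ} (hA : σA.PosSemidef ∧ σA.trace = 1)
    (hB : σB.PosSemidef ∧ σB.trace = 1) : IsSeparableState (σA ⊗ₖ σB) :=
  ⟨1, fun _ => 1, fun _ => σA, fun _ => σB, fun _ => zero_le_one, by simp, fun _ => hA,
    fun _ => hB, by simp⟩

lemma posSemidef_inv_smul_one_and_trace_eq_one {d : ℕ} (hd : 0 < d) :
    (((d : ℂ)⁻¹ • (1 : Matrix (Fin d) (Fin d) ℂ)).PosSemidef ∧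
      ((d : ℂ)⁻¹ • (1 : Matrix (Fin d) (Fin d) ℂ)).trace = 1) := by
  refine ⟨Matrix.PosSemidef.one.smul ?_, ?_⟩
  · rw [← Complex.ofReal_natCast, ← Complex.ofReal_inv, Complex.zero_le_real]
    positivity
  · rw [Matrix.trace_smul, Matrix.trace_one, Fintype.card_fin, smul_eq_mul,
      inv_mul_cancel₀ (by exact_mod_cast hd.ne')]

lemma exists_isSeparableState_mixture {dA dB : ℕ}
    {ρ : Matrix (Fin dA × Fin dB) (Fin dA × Fin dB) ℂ} (hρ : ρ.PosSemidef) (htr : ρ.trace = 1) :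
    ∃ t : ℝ, 0 ≤ t ∧ ∃ τ : Matrix (Fin dA × Fin dB) (Fin dA × Fin dB) ℂ,
      τ.PosSemidef ∧ τ.trace = 1 ∧
      IsSeparableState ((((1 + t)⁻¹ : ℝ) : ℂ) • (ρ + ((t : ℝ) : ℂ) • τ)) := by
  obtain ⟨i, j⟩ : Nonempty (Fin dA × Fin dB) := by
    by_contra h
    rw [not_nonempty_iff] at h
    simp [Matrix.trace_eq_zero_of_isEmpty] at htr
  set N : ℝ := dA * dB
  have hdA : (dA : ℂ) ≠ 0 := Nat.cast_ne_zero.mpr i.pos.ne'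
  have hdB : (dB : ℂ) ≠ 0 := Nat.cast_ne_zero.mpr j.pos.ne'
  refine ⟨N, by positivity, ((N⁻¹ : ℝ) : ℂ) • (1 - ρ) + ((N⁻¹ * N⁻¹ : ℝ) : ℂ) • 1, ?_, ?_, ?_⟩
  · exact (hρ.one_sub_of_trace_eq_one htr).smul (by positivity) |>.add
      (Matrix.PosSemidef.one.smul (by positivity))
  · rw [Matrix.trace_add, Matrix.trace_smul, Matrix.trace_sub, htr, Matrix.trace_smul,
      Matrix.trace_one, Fintype.card_prod, Fintype.card_fin, Fintype.card_fin]
    simp only [smul_eq_mul, N]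
    push_cast
    field_simp
    ring
  · convert isSeparableState_kronecker (posSemidef_inv_smul_one_and_trace_eq_one i.pos)
      (posSemidef_inv_smul_one_and_trace_eq_one j.pos) using 1
    rw [Matrix.smul_kronecker, Matrix.kronecker_smul, Matrix.one_kronecker_one, smul_smul]
    simp only [smul_add, smul_sub, smul_smul]
    match_scalars <;> simp only [N] <;> push_cast <;> field_simp <;> ring

lemma steeringRobustness_inducedAssemblage_le {dA dB nA nX : ℕ}
    {M : Fin nA → Fin nX → Matrix (Fin dA) (Fin dA) ℂ} (hMpsd : ∀ a x, (M a x).PosSemidef)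
    (hMsum : ∀ x, ∑ a, M a x = 1) {ρ τ : Matrix (Fin dA × Fin dB) (Fin dA × Fin dB) ℂ} {t : ℝ}
    (ht : 0 ≤ t) (hτ : τ.PosSemidef) (hτtr : τ.trace = 1)
    (hsep : IsSeparableState ((((1 + t)⁻¹ : ℝ) : ℂ) • (ρ + ((t : ℝ) : ℂ) • τ))) :
    SteeringRobustness (inducedAssemblage M ρ) ≤ t := by
  refine csInf_le ⟨0, fun s hs => hs.1⟩
    ⟨ht, inducedAssemblage M τ, isAssemblage_inducedAssemblage hMpsd hMsum hτ hτtr, ?_⟩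
  convert unsteerable_inducedAssemblage hMpsd hMsum hsep using 1
  funext a x
  rw [inducedAssemblage_smul, inducedAssemblage_add, inducedAssemblage_smul]

/-- The steering robustness of a bipartite state is bounded above by its generalized
robustness of entanglement. -/
theorem rsteer_le_rg {dA dB : ℕ}
    (ρ : Matrix (Fin dA × Fin dB) (Fin dA × Fin dB) ℂ)
    (hρ : ρ.PosSemidef) (htr : ρ.trace = 1) :
    Rsteer ρ ≤ Rg ρ := by
  refine Real.sSup_le ?_ (Real.sInf_nonneg fun t ht => ht.1)
  rintro r ⟨nA, nX, M, hMpsd, hMsum, rfl⟩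
  obtain ⟨t₀, ht₀, τ₀, hτ₀⟩ := exists_isSeparableState_mixture hρ htr
  refine le_csInf ⟨t₀, ht₀, τ₀, hτ₀⟩ ?_
  rintro t ⟨ht, τ, hτ, hτtr, hsep⟩
  exact steeringRobustness_inducedAssemblage_le hMpsd hMsum ht hτ hτtr hsep
end

section
/- Saturation of the dual SDP constraint: if {F_{a|x}} is an optimal solution to the dual SDP maximize Σ_{a,x} Tr(F_{a|x}ρ_{a|x}) subject to F_{a|x} ≥ 0 and Σ_{a,x} D(a|x,λ)F_{a|x} ≤ 1 for all deterministic λ, then the F_{a|x} can be chosen so that there exist a deterministic strategy λ and a unit vector |φ⟩ with Σ_{a,x} D(a|x,λ) ⟨φ| F_{a|x} |φ⟩ = 1. -/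
/-!
If no operator `Σ_x F₀_{f(x)|x}` has eigenvalue `1`, then, being `≤ 1` by feasibility, they all
have spectrum strictly below `1`, so `t • F₀` stays feasible for some `t > 1`. Its value
`t · opt` exceeds `opt`, since `opt ≥ 1` is witnessed by the feasible point `F_{a|x} = 1 / |X|`.
Hence `F₀` itself saturates the constraint at a unit eigenvector for the eigenvalue `1`.
-/

open Matrix BigOperators
open scoped ComplexOrder

/-- Dual feasibility for the steering-robustness SDP. -/
def DualFeasible {A X : Type*} [Fintype A] [Fintype X] [DecidableEq A] [DecidableEq X]
    {n : ℕ} (F : A → X → Matrix (Fin n) (Fin n) ℂ) : Prop :=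
  (∀ a x, (F a x).PosSemidef) ∧
  (∀ f : X → A,
    ((1 : Matrix (Fin n) (Fin n) ℂ) -
      ∑ x, ∑ a, if a = f x then F a x else 0).PosSemidef)

open Filter Topology

namespace Matrix.IsHermitian

variable {n 𝕜 : Type*} [Fintype n] [DecidableEq n] [RCLike 𝕜] {A : Matrix n n 𝕜}

theorem posSemidef_one_sub_smul_iff (hA : A.IsHermitian) (t : ℝ) :
    (1 - t • A).PosSemidef ↔ ∀ i, t * hA.eigenvalues i ≤ 1 := by
  have hdiag : 1 - t • A = Unitary.conjStarAlgAut 𝕜 _ hA.eigenvectorUnitary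
      (diagonal (RCLike.ofReal ∘ fun i => 1 - t * hA.eigenvalues i)) := by
    conv_lhs => rw [hA.spectral_theorem]
    rw [RCLike.real_smul_eq_coe_smul (K := 𝕜),
      ← map_one (Unitary.conjStarAlgAut 𝕜 _ hA.eigenvectorUnitary), ← map_smul, ← map_sub]
    congr 1
    ext i j
    rcases eq_or_ne i j with rfl | h <;> simp [*]
  rw [hdiag, Unitary.conjStarAlgAut_apply, Unitary.isUnit_coe.posSemidef_star_right_conjugate_iff,
    posSemidef_diagonal_iff]
  simp only [Function.comp_apply, RCLike.ofReal_nonneg, sub_nonneg]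

theorem star_eigenvectorBasis_dotProduct_self (hA : A.IsHermitian) (i : n) :
    star ⇑(hA.eigenvectorBasis i) ⬝ᵥ ⇑(hA.eigenvectorBasis i) = 1 := by
  rw [dotProduct_comm, ← EuclideanSpace.inner_eq_star_dotProduct, inner_self_eq_norm_sq_to_K,
    hA.eigenvectorBasis.orthonormal.1 i]
  simp

theorem star_eigenvectorBasis_dotProduct_mulVec (hA : A.IsHermitian) (i : n) :
    star ⇑(hA.eigenvectorBasis i) ⬝ᵥ A *ᵥ ⇑(hA.eigenvectorBasis i) = hA.eigenvalues i := by
  rw [mulVec_eigenvectorBasis, RCLike.real_smul_eq_coe_smul (K := 𝕜), dotProduct_smul,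
    star_eigenvectorBasis_dotProduct_self, smul_eq_mul, mul_one]

theorem eventually_posSemidef_one_sub_smul (hA : A.IsHermitian) (hle : (1 - A).PosSemidef)
    (hne : ∀ φ : n → 𝕜, star φ ⬝ᵥ φ = 1 → star φ ⬝ᵥ A *ᵥ φ ≠ 1) :
    ∀ᶠ t in 𝓝 (1 : ℝ), (1 - t • A).PosSemidef := by
  have hlt : ∀ i, hA.eigenvalues i < 1 := by
    intro i
    refine lt_of_le_of_ne (by simpa using (hA.posSemidef_one_sub_smul_iff 1).1 (by simpa) i) ?_
    intro heq
    refine hne _ (hA.star_eigenvectorBasis_dotProduct_self i) ?_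
    rw [star_eigenvectorBasis_dotProduct_mulVec, heq, RCLike.ofReal_one]
  have hnear : ∀ᶠ t in 𝓝 (1 : ℝ), ∀ i, t * hA.eigenvalues i < 1 :=
    eventually_all.2 fun i =>
      ((continuous_id.mul continuous_const).tendsto' 1 _ (one_mul _)).eventually_lt_const (hlt i)
  filter_upwards [hnear] with t ht
  exact (hA.posSemidef_one_sub_smul_iff t).2 fun i => (ht i).le

end Matrix.IsHermitian

section SteeringDual

variable {A X : Type*} [Fintype A] [Fintype X] {n : ℕ}

def dualObjective (ρ F : A → X → Matrix (Fin n) (Fin n) ℂ) : ℝ :=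
  (∑ a, ∑ x, (F a x * ρ a x).trace).re

theorem dualObjective_smul (ρ F : A → X → Matrix (Fin n) (Fin n) ℂ) (t : ℝ) :
    dualObjective ρ (t • F) = t * dualObjective ρ F := by
  simp [dualObjective, trace_smul, Finset.mul_sum]

theorem dualObjective_uniform [Nonempty X] (ρ : A → X → Matrix (Fin n) (Fin n) ℂ)
    (ρhat : Matrix (Fin n) (Fin n) ℂ) (hρhat : ∀ x, ∑ a, ρ a x = ρhat) (htr : ρhat.trace = 1) :
    dualObjective ρ (fun _ _ => (Fintype.card X : ℝ)⁻¹ • 1) = 1 := by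
  have hrow : ∀ x, (∑ a, (ρ a x).trace).re = 1 := fun x => by
    rw [← trace_sum, hρhat, htr, Complex.one_re]
  calc dualObjective ρ (fun _ _ => (Fintype.card X : ℝ)⁻¹ • 1)
      = (Fintype.card X : ℝ)⁻¹ * ∑ x, (∑ a, (ρ a x).trace).re := by
        simp only [dualObjective, smul_mul, one_mul, trace_smul, Finset.mul_sum,
          Complex.real_smul, Complex.re_ofReal_mul, Complex.re_sum]
        rw [Finset.sum_comm]
    _ = 1 := by simp [hrow]

variable [DecidableEq A]

def strategyOperator (F : A → X → Matrix (Fin n) (Fin n) ℂ) (f : X → A) :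
    Matrix (Fin n) (Fin n) ℂ :=
  ∑ x, ∑ a, if a = f x then F a x else 0

theorem strategyOperator_smul (t : ℝ) (F : A → X → Matrix (Fin n) (Fin n) ℂ) (f : X → A) :
    strategyOperator (t • F) f = t • strategyOperator F f := by
  simp only [strategyOperator, Finset.smul_sum, smul_ite, smul_zero, Pi.smul_apply]

theorem dotProduct_strategyOperator_mulVec (F : A → X → Matrix (Fin n) (Fin n) ℂ) (f : X → A)
    (φ : Fin n → ℂ) :
    star φ ⬝ᵥ strategyOperator F f *ᵥ φ =
      ∑ x, ∑ a, if a = f x then star φ ⬝ᵥ F a x *ᵥ φ else 0 := by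
  simp only [strategyOperator, sum_mulVec, dotProduct_sum, apply_ite (· *ᵥ φ),
    apply_ite (star φ ⬝ᵥ ·), zero_mulVec, dotProduct_zero]

variable [DecidableEq X]

theorem dualFeasible_uniform [Nonempty X] :
    DualFeasible
      (fun (_ : A) (_ : X) => (Fintype.card X : ℝ)⁻¹ • (1 : Matrix (Fin n) (Fin n) ℂ)) := by
  refine ⟨fun _ _ => PosSemidef.one.smul (by positivity), fun f => ?_⟩
  have hsum : strategyOperator (fun (_ : A) (_ : X) =>
      (Fintype.card X : ℝ)⁻¹ • (1 : Matrix (Fin n) (Fin n) ℂ)) f = 1 := by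
    simp only [strategyOperator, Finset.sum_ite_eq', Finset.mem_univ, if_true, Finset.sum_const,
      Finset.card_univ, ← Nat.cast_smul_eq_nsmul ℝ, smul_smul, one_smul,
      mul_inv_cancel₀ (Nat.cast_ne_zero.2 Fintype.card_ne_zero : (Fintype.card X : ℝ) ≠ 0)]
  show (1 - strategyOperator _ f).PosSemidef
  rw [hsum, sub_self]
  exact .zero

namespace DualFeasible

variable {F : A → X → Matrix (Fin n) (Fin n) ℂ}

theorem posSemidef_strategyOperator (hF : DualFeasible F) (f : X → A) :
    (strategyOperator F f).PosSemidef :=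
  posSemidef_sum _ fun x _ => posSemidef_sum _ fun a _ => by
    split_ifs
    · exact hF.1 a x
    · exact .zero

theorem smul (hF : DualFeasible F) {t : ℝ} (ht : 0 ≤ t)
    (hle : ∀ f, (1 - t • strategyOperator F f).PosSemidef) : DualFeasible (t • F) := by
  refine ⟨fun a x => (hF.1 a x).smul ht, fun f => ?_⟩
  show (1 - strategyOperator (t • F) f).PosSemidef
  rw [strategyOperator_smul]
  exact hle f

end DualFeasible

end SteeringDual

theorem dual_optimal_solution_saturates_general
    {A X : Type*} [Fintype A] [Fintype X] [DecidableEq A] [DecidableEq X]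
    [Nonempty X] {n : ℕ}
    (ρ : A → X → Matrix (Fin n) (Fin n) ℂ)
    (ρhat : Matrix (Fin n) (Fin n) ℂ)
    (hρhat : ∀ x, ∑ a, ρ a x = ρhat)
    (htr : ρhat.trace = 1)
    (F₀ : A → X → Matrix (Fin n) (Fin n) ℂ)
    (hF₀ : DualFeasible F₀)
    (hopt : ∀ G : A → X → Matrix (Fin n) (Fin n) ℂ, DualFeasible G →
      (∑ a, ∑ x, ((G a x) * (ρ a x)).trace).re
        ≤ (∑ a, ∑ x, ((F₀ a x) * (ρ a x)).trace).re) :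
    ∃ F : A → X → Matrix (Fin n) (Fin n) ℂ,
      DualFeasible F ∧
      (∑ a, ∑ x, ((F a x) * (ρ a x)).trace).re
        = (∑ a, ∑ x, ((F₀ a x) * (ρ a x)).trace).re ∧
      ∃ (f : X → A) (φ : Fin n → ℂ),
        star φ ⬝ᵥ φ = 1 ∧
        (∑ x, ∑ a, if a = f x then star φ ⬝ᵥ (F a x) *ᵥ φ else 0) = 1 := by
  by_contra hsat
  push Not at hsat
  have hne (f : X → A) (φ : Fin n → ℂ) (hφ : star φ ⬝ᵥ φ = 1) :
      star φ ⬝ᵥ strategyOperator F₀ f *ᵥ φ ≠ 1 := by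
    rw [dotProduct_strategyOperator_mulVec]
    exact hsat F₀ hF₀ rfl f φ hφ
  have hnear : ∀ᶠ t in 𝓝 (1 : ℝ), ∀ f, (1 - t • strategyOperator F₀ f).PosSemidef :=
    eventually_all.2 fun f => (hF₀.posSemidef_strategyOperator f).isHermitian
      |>.eventually_posSemidef_one_sub_smul (hF₀.2 f) (hne f)
  obtain ⟨t, hle, ht⟩ := ((hnear.filter_mono nhdsWithin_le_nhds).and
    (self_mem_nhdsWithin : Set.Ioi (1 : ℝ) ∈ 𝓝[>] 1)).exists
  have hone : 1 ≤ dualObjective ρ F₀ :=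
    dualObjective_uniform ρ ρhat hρhat htr ▸ hopt _ dualFeasible_uniform
  have hscaled : t * dualObjective ρ F₀ ≤ dualObjective ρ F₀ :=
    dualObjective_smul ρ F₀ t ▸ hopt _ (hF₀.smul (by linarith) hle)
  nlinarith

/-- Saturation of the dual SDP constraint: an optimal dual solution can be chosen so
that for some deterministic strategy `f` and unit vector `φ`,
`Σ_{a,x} D(a|x,f) ⟨φ|F_{a|x}|φ⟩ = 1`. -/
theorem dual_optimal_solution_saturates
    {A X : Type*} [Fintype A] [Fintype X] [DecidableEq A] [DecidableEq X]
    [Nonempty X] {n : ℕ}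
    (ρ : A → X → Matrix (Fin n) (Fin n) ℂ)
    (hρpos : ∀ a x, (ρ a x).PosSemidef)
    (ρhat : Matrix (Fin n) (Fin n) ℂ)
    (hρhat : ∀ x, ∑ a, ρ a x = ρhat)
    (htr : ρhat.trace = 1)
    (F₀ : A → X → Matrix (Fin n) (Fin n) ℂ)
    (hF₀ : DualFeasible F₀)
    (hopt : ∀ G : A → X → Matrix (Fin n) (Fin n) ℂ, DualFeasible G →
      (∑ a, ∑ x, ((G a x) * (ρ a x)).trace).re
        ≤ (∑ a, ∑ x, ((F₀ a x) * (ρ a x)).trace).re) :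
    ∃ F : A → X → Matrix (Fin n) (Fin n) ℂ,
      DualFeasible F ∧
      (∑ a, ∑ x, ((F a x) * (ρ a x)).trace).re
        = (∑ a, ∑ x, ((F₀ a x) * (ρ a x)).trace).re ∧
      ∃ (f : X → A) (φ : Fin n → ℂ),
        star φ ⬝ᵥ φ = 1 ∧
        (∑ x, ∑ a, if a = f x then star φ ⬝ᵥ (F a x) *ᵥ φ else 0) = 1 :=
  dual_optimal_solution_saturates_general ρ ρhat hρhat htr F₀ hF₀ hopt
end

section
/- Let {|ψ_{a|x}⟩}_{a=1..d}, x = 1..d+1, be d+1 mutually unbiased orthonormal bases of C^d. Then for every choice function f : {1,…,d+1} → {1,…,d}, the operator norm satisfies ‖ Σ_{x=1}^{d+1} |ψ_{f(x)|x}⟩⟨ψ_{f(x)|x}| ‖_∞ ≤ 1 + √d. -/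
/-!
The sum of the chosen projectors is `B * Bᴴ`, where the columns of `B` are the chosen vectors.
By the C⋆-identity it has the same norm as the Gram matrix `Bᴴ * B`, whose diagonal is `1` and
whose off-diagonal entries have modulus `1/√d`. The Schur test bounds the off-diagonal part by
its row sums `d/√d = √d`.
-/

open Matrix
open scoped Matrix.Norms.L2Operator

theorem Fintype.sum_norm_le_card_sub_one_mul {E n : Type*} [SeminormedAddCommGroup E] [Fintype n]
    [DecidableEq n] (g : n → E) {i : n} {c : ℝ} (hi : g i = 0) (hg : ∀ j, j ≠ i → ‖g j‖ ≤ c) :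
    ∑ j, ‖g j‖ ≤ (Fintype.card n - 1) * c := by
  rw [← Finset.sum_erase Finset.univ (f := fun j => ‖g j‖) (a := i) (by simp [hi])]
  calc ∑ j ∈ Finset.univ.erase i, ‖g j‖
      ≤ ∑ j ∈ Finset.univ.erase i, c :=
        Finset.sum_le_sum fun j hj => hg j (Finset.ne_of_mem_erase hj)
    _ = (Fintype.card n - 1) * c := by
      rw [Finset.sum_const, Finset.card_erase_of_mem (Finset.mem_univ i), Finset.card_univ,
        nsmul_eq_mul, Nat.cast_pred (Fintype.card_pos_iff.2 ⟨i⟩)]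

namespace Matrix

variable {𝕜 ι m n : Type*} [RCLike 𝕜]

theorem sum_vecMulVec_self_star [Fintype ι] (v : ι → m → 𝕜) :
    ∑ x, vecMulVec (v x) (star (v x)) = (of v)ᵀ * (of v)ᵀᴴ := by
  ext i j
  simp [sum_apply, mul_apply, vecMulVec_apply]

theorem conjTranspose_mul_self_transpose_of_apply [Fintype m] (v : ι → m → 𝕜) (x y : ι) :
    ((of v)ᵀᴴ * (of v)ᵀ) x y = star (v x) ⬝ᵥ v y := by
  simp [mul_apply, dotProduct]

theorem norm_mulVec_apply_sq_le [Fintype n] (A : Matrix m n 𝕜) (v : n → 𝕜) (i : m) :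
    ‖(A *ᵥ v) i‖ ^ 2 ≤ (∑ j, ‖A i j‖) * ∑ j, ‖A i j‖ * ‖v j‖ ^ 2 := by
  have hle : ‖(A *ᵥ v) i‖ ≤ ∑ j, ‖A i j‖ * ‖v j‖ :=
    (norm_sum_le _ _).trans_eq (by simp only [norm_mul])
  grw [hle]
  exact Finset.sum_sq_le_sum_mul_sum_of_sq_le_mul _ (fun _ _ => norm_nonneg _)
    (fun _ _ => by positivity) (fun _ _ => (by ring : _ = _).le)

variable [Fintype m] [Fintype n]

/-- **Schur test**. -/
theorem l2_opNorm_le_sqrt_mul_of_sum_norm_le [DecidableEq n] (A : Matrix m n 𝕜) {R C : ℝ}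
    (hR : 0 ≤ R) (hrow : ∀ i, ∑ j, ‖A i j‖ ≤ R) (hcol : ∀ j, ∑ i, ‖A i j‖ ≤ C) :
    ‖A‖ ≤ √(R * C) := by
  rw [l2_opNorm_def]
  refine ContinuousLinearMap.opNorm_le_bound _ (Real.sqrt_nonneg _) fun v => ?_
  have hsq : ∑ i, ‖(A *ᵥ v) i‖ ^ 2 ≤ R * C * ‖v‖ ^ 2 :=
    calc ∑ i, ‖(A *ᵥ v) i‖ ^ 2
        ≤ ∑ i, R * ∑ j, ‖A i j‖ * ‖v j‖ ^ 2 := by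
          gcongr with i
          exact (norm_mulVec_apply_sq_le A v i).trans (by gcongr; exact hrow i)
      _ = R * ∑ j, (∑ i, ‖A i j‖) * ‖v j‖ ^ 2 := by
          simp only [← Finset.mul_sum, Finset.sum_mul]; rw [Finset.sum_comm]
      _ ≤ R * ∑ j, C * ‖v j‖ ^ 2 := by gcongr with j; exact hcol j
      _ = R * C * ‖v‖ ^ 2 := by rw [EuclideanSpace.norm_sq_eq, ← Finset.mul_sum, mul_assoc]
  rw [EuclideanSpace.norm_eq]
  calc √(∑ i, ‖(A *ᵥ v) i‖ ^ 2) ≤ √(R * C * ‖v‖ ^ 2) := Real.sqrt_le_sqrt hsq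
    _ = √(R * C) * ‖v‖ := by rw [Real.sqrt_mul' _ (sq_nonneg _), Real.sqrt_sq (norm_nonneg _)]

theorem l2_opNorm_mul_conjTranspose_self [DecidableEq m] [DecidableEq n] (A : Matrix m n 𝕜) :
    ‖A * Aᴴ‖ = ‖Aᴴ * A‖ := by
  have h := l2_opNorm_conjTranspose_mul_self Aᴴ
  rw [conjTranspose_conjTranspose, l2_opNorm_conjTranspose] at h
  rw [h, l2_opNorm_conjTranspose_mul_self]

theorem l2_opNorm_le_one_add_of_norm_offDiag_le [DecidableEq n] [Nonempty n] (A : Matrix n n 𝕜)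
    {c : ℝ} (hc : 0 ≤ c) (hdiag : ∀ i, A i i = 1) (hoff : ∀ i j, i ≠ j → ‖A i j‖ ≤ c) :
    ‖A‖ ≤ 1 + (Fintype.card n - 1) * c := by
  have hE : ∀ i j, i ≠ j → ‖(A - 1) i j‖ ≤ c := fun i j h => by
    simpa [one_apply_ne h] using hoff i j h
  have hR : 0 ≤ ((Fintype.card n : ℝ) - 1) * c :=
    mul_nonneg (sub_nonneg.2 (Nat.one_le_cast.2 Fintype.card_pos)) hc
  have hEnorm : ‖A - 1‖ ≤ (Fintype.card n - 1) * c := by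
    refine (l2_opNorm_le_sqrt_mul_of_sum_norm_le _ hR (fun i => ?_) (fun j => ?_)).trans_eq
      (Real.sqrt_mul_self hR)
    · exact Fintype.sum_norm_le_card_sub_one_mul _ (by simp [hdiag]) fun j h => hE i j h.symm
    · exact Fintype.sum_norm_le_card_sub_one_mul _ (by simp [hdiag]) fun i h => hE i j h
  calc ‖A‖ = ‖1 + (A - 1)‖ := by rw [add_sub_cancel]
    _ ≤ ‖(1 : Matrix n n 𝕜)‖ + ‖A - 1‖ := norm_add_le _ _
    _ ≤ 1 + (Fintype.card n - 1) * c := by rw [CStarRing.norm_one]; gcongr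

end Matrix

theorem mub_projector_sum_norm_bound_general
    {d : ℕ}
    (ψ : Fin d → Fin (d + 1) → (Fin d → ℂ))
    (horth : ∀ x a b, star (ψ a x) ⬝ᵥ ψ b x = if a = b then 1 else 0)
    (hmub : ∀ (x y : Fin (d + 1)) (a b : Fin d), x ≠ y →
      ‖star (ψ a x) ⬝ᵥ ψ b y‖ = 1 / Real.sqrt d)
    (f : Fin (d + 1) → Fin d) :
    ‖Matrix.toEuclideanCLM (𝕜 := ℂ)
        (∑ x, Matrix.vecMulVec (ψ (f x) x) (star (ψ (f x) x)))‖
      ≤ 1 + Real.sqrt d := by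
  set B := (of fun x => ψ (f x) x)ᵀ
  have hgram := conjTranspose_mul_self_transpose_of_apply fun x => ψ (f x) x
  calc ‖toEuclideanCLM (𝕜 := ℂ) (∑ x, vecMulVec (ψ (f x) x) (star (ψ (f x) x)))‖
      = ‖Bᴴ * B‖ := by
        rw [l2_opNorm_toEuclideanCLM, sum_vecMulVec_self_star, l2_opNorm_mul_conjTranspose_self]
    _ ≤ 1 + (Fintype.card (Fin (d + 1)) - 1) * (1 / √d) :=
        l2_opNorm_le_one_add_of_norm_offDiag_le _ (by positivity)
          (fun x => by rw [hgram, horth, if_pos rfl])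
          (fun x y hxy => by rw [hgram, hmub x y _ _ hxy])
    _ = 1 + √d := by
        rw [Fintype.card_fin, Nat.cast_add_one, add_sub_cancel_right, mul_one_div, Real.div_sqrt]

/-- For `d+1` mutually unbiased bases of `ℂ^d` and any choice function `f`, the sum of
the chosen rank-one projectors has operator norm at most `1 + √d`. -/
theorem mub_projector_sum_norm_bound
    {d : ℕ} (hd : 0 < d)
    (ψ : Fin d → Fin (d + 1) → (Fin d → ℂ))
    (horth : ∀ x a b, star (ψ a x) ⬝ᵥ ψ b x = if a = b then 1 else 0)
    (hmub : ∀ (x y : Fin (d + 1)) (a b : Fin d), x ≠ y →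
      ‖star (ψ a x) ⬝ᵥ ψ b y‖ = 1 / Real.sqrt d)
    (f : Fin (d + 1) → Fin d) :
    ‖Matrix.toEuclideanCLM (𝕜 := ℂ)
        (∑ x, Matrix.vecMulVec (ψ (f x) x) (star (ψ (f x) x)))‖
      ≤ 1 + Real.sqrt d :=
  mub_projector_sum_norm_bound_general ψ horth hmub f
end

section
/- Let {|ψ_{a|x}⟩}, a = 1..d, x = 1..d+1, be d+1 mutually unbiased bases of C^d and consider the assemblage ρ_{a|x} = (1/d)|ψ_{a|x}⟩⟨ψ_{a|x}|. Then the steering robustness satisfies R({ρ_{a|x}}) ≥ √d·(√d−1)/(√d+1) ≥ √d − 2. In particular the operators F_{a|x} = (1/(√d+1))|ψ_{a|x}⟩⟨ψ_{a|x}| are dual-feasible (F_{a|x} ≥ 0 and Σ_{a,x} D(a|x,λ)F_{a|x} ≤ 1 for every deterministic λ) and achieve Σ_{a,x} Tr(F_{a|x}ρ_{a|x}) = (d+1)/(√d+1). -/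
open Matrix BigOperators
open scoped ComplexOrder

/-!
The operators `F_{a|x} = P_{a|x} / (√d + 1)`, `P_{a|x} = |ψ_{a|x}⟩⟨ψ_{a|x}|`, are feasible for
the dual of the steering-robustness SDP. For a deterministic strategy `f` the `d + 1` unit vectors
`ψ_{f(x)|x}` have pairwise overlaps `1/√d`, so their Gram matrix has row sums at most
`1 + d/√d = 1 + √d`. Hence the synthesis map `c ↦ Σ_x c_x ψ_{f(x)|x}`, and with it its adjoint,
has squared norm at most `1 + √d`, i.e. `Σ_x P_{f(x)|x} ≤ (1 + √d) · 1`.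

Weak duality: if `(ρ + tτ)/(1 + t) = Σ_f D_f σ_f` with `σ_f ≥ 0`, pairing with `F` gives
`Σ Tr(F ρ) ≤ (1 + t) Σ_f Tr((Σ_x F_{f(x)|x}) σ_f) ≤ (1 + t) Σ_f Tr σ_f = 1 + t`,
so `R + 1 ≥ Σ Tr(F ρ) = (d + 1)/(√d + 1)`.
-/
open scoped InnerProductSpace

section AlmostOrthogonal

variable {𝕜 E ι : Type*} [RCLike 𝕜] [NormedAddCommGroup E] [InnerProductSpace 𝕜 E] [Fintype ι]

/-- Schur test: the Gram matrix of `φ` is entrywise bounded by `ε + (1 - ε) δ_{xy}`. -/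
theorem norm_sum_smul_sq_le_of_norm_inner_le {φ : ι → E} {ε : ℝ} (hε : 0 ≤ ε)
    (hnorm : ∀ x, ‖φ x‖ = 1) (hinner : ∀ x y, x ≠ y → ‖⟪φ x, φ y⟫_𝕜‖ ≤ ε) (c : ι → 𝕜) :
    ‖∑ x, c x • φ x‖ ^ 2 ≤ (1 + (Fintype.card ι - 1) * ε) * ∑ x, ‖c x‖ ^ 2 := by
  classical
  have hgram : ∀ x y, ‖⟪φ x, φ y⟫_𝕜‖ ≤ ε + (1 - ε) * if x = y then 1 else 0 := by
    intro x y
    by_cases h : x = y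
    · simp [h, inner_self_eq_norm_sq_to_K, hnorm]
    · simpa [h] using hinner x y h
  calc ‖∑ x, c x • φ x‖ ^ 2
      ≤ ‖∑ x, ∑ y, starRingEnd 𝕜 (c x) * c y * ⟪φ x, φ y⟫_𝕜‖ := by
        rw [← inner_self_eq_norm_sq (𝕜 := 𝕜)]
        refine (RCLike.re_le_norm _).trans_eq ?_
        simp only [sum_inner, inner_sum, inner_smul_left, inner_smul_right, Finset.mul_sum]
        rw [Finset.sum_comm]
        exact congrArg _ <| Finset.sum_congr rfl fun _ _ => Finset.sum_congr rfl fun _ _ => by ring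
    _ ≤ ∑ x, ∑ y, ‖c x‖ * ‖c y‖ * (ε + (1 - ε) * if x = y then 1 else 0) := by
        refine (norm_sum_le _ _).trans (Finset.sum_le_sum fun x _ => ?_)
        refine (norm_sum_le _ _).trans (Finset.sum_le_sum fun y _ => ?_)
        rw [norm_mul, norm_mul, RCLike.norm_conj]
        exact mul_le_mul_of_nonneg_left (hgram x y) (by positivity)
    _ = ∑ x, ∑ y, (ε * (‖c x‖ * ‖c y‖) + if x = y then (1 - ε) * ‖c x‖ ^ 2 else 0) := by
        refine Finset.sum_congr rfl fun x _ => Finset.sum_congr rfl fun y _ => ?_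
        split_ifs with h
        · subst h; ring
        · ring
    _ = ε * (∑ x, ‖c x‖) ^ 2 + (1 - ε) * ∑ x, ‖c x‖ ^ 2 := by
        simp only [Finset.sum_add_distrib, Finset.sum_ite_eq, Finset.mem_univ, if_true,
          ← Finset.mul_sum, sq, Finset.sum_mul_sum]
    _ ≤ ε * (Fintype.card ι * ∑ x, ‖c x‖ ^ 2) + (1 - ε) * ∑ x, ‖c x‖ ^ 2 := by
        gcongr
        exact sq_sum_le_card_mul_sum_sq
    _ = (1 + (Fintype.card ι - 1) * ε) * ∑ x, ‖c x‖ ^ 2 := by ring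

/-- The synthesis bound implies the analysis bound with the same constant (`‖T‖ = ‖T*‖`),
tested against `c x = ⟪φ x, v⟫`. -/
theorem sum_norm_inner_sq_le_of_norm_sum_smul_sq_le {φ : ι → E} {C : ℝ} (hC0 : 0 ≤ C)
    (hC : ∀ c : ι → 𝕜, ‖∑ x, c x • φ x‖ ^ 2 ≤ C * ∑ x, ‖c x‖ ^ 2) (v : E) :
    ∑ x, ‖⟪φ x, v⟫_𝕜‖ ^ 2 ≤ C * ‖v‖ ^ 2 := by
  set S := ∑ x, ‖⟪φ x, v⟫_𝕜‖ ^ 2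
  set w := ∑ x, ⟪φ x, v⟫_𝕜 • φ x
  have hwv : ⟪w, v⟫_𝕜 = S := by
    simp only [w, S, sum_inner, inner_smul_left, RCLike.conj_mul, RCLike.ofReal_sum,
      RCLike.ofReal_pow]
  have hS : S ≤ ‖w‖ * ‖v‖ := by
    have := norm_inner_le_norm (𝕜 := 𝕜) w v
    rwa [hwv, RCLike.norm_ofReal, abs_of_nonneg (by positivity)] at this
  have hS2 : S ^ 2 ≤ C * S * ‖v‖ ^ 2 :=
    calc S ^ 2 ≤ (‖w‖ * ‖v‖) ^ 2 := by gcongr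
      _ = ‖w‖ ^ 2 * ‖v‖ ^ 2 := by ring
      _ ≤ C * S * ‖v‖ ^ 2 := by gcongr; exact hC _
  rcases (show 0 ≤ S by positivity).eq_or_lt with hS0 | hS0
  · rw [← hS0]; positivity
  · nlinarith

end AlmostOrthogonal

section Matrices

variable {𝕜 n ι : Type*} [RCLike 𝕜] [Fintype n]

theorem Matrix.PosSemidef.trace_mul_nonneg_s17 {A B : Matrix n n 𝕜} (hA : A.PosSemidef)
    (hB : B.PosSemidef) : 0 ≤ (A * B).trace := by
  obtain ⟨m, v, rfl⟩ := posSemidef_iff_eq_sum_vecMulVec.mp hB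
  rw [Finset.mul_sum, trace_sum]
  refine Finset.sum_nonneg fun i _ => ?_
  rw [mul_vecMulVec, trace_vecMulVec, dotProduct_comm]
  exact hA.dotProduct_mulVec_nonneg _

theorem norm_toLp_eq_one_of_star_dotProduct_self {u : n → 𝕜} (hu : star u ⬝ᵥ u = 1) :
    ‖WithLp.toLp 2 u‖ = 1 := by
  have h := inner_self_eq_norm_sq_to_K (𝕜 := 𝕜) (WithLp.toLp 2 u)
  rw [EuclideanSpace.inner_toLp_toLp, dotProduct_comm, hu] at h
  exact (pow_eq_one_iff_of_nonneg (norm_nonneg _) two_ne_zero).mp (by exact_mod_cast h.symm)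

theorem trace_vecMulVec_mul_self {u : n → 𝕜} (hu : star u ⬝ᵥ u = 1) :
    (vecMulVec u (star u) * vecMulVec u (star u)).trace = 1 := by
  rw [vecMulVec_mul_vecMulVec, hu, one_smul, trace_vecMulVec, dotProduct_comm, hu]

theorem sum_vecMulVec_eq_one [DecidableEq n] {v : n → n → 𝕜}
    (hv : ∀ a b, star (v a) ⬝ᵥ v b = if a = b then 1 else 0) :
    ∑ a, vecMulVec (v a) (star (v a)) = 1 := by
  set U : Matrix n n 𝕜 := Matrix.of fun i a => v a i
  have hU : Uᴴ * U = 1 := by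
    ext a b
    simpa [U, Matrix.mul_apply, Matrix.one_apply, dotProduct] using hv a b
  rw [← mul_eq_one_comm.mp hU]
  ext i j
  simp [U, Matrix.sum_apply, vecMulVec_apply, Matrix.mul_apply]

theorem star_dotProduct_vecMulVec_mulVec (u v : n → 𝕜) :
    star v ⬝ᵥ (vecMulVec u (star u) *ᵥ v)
      = ((‖⟪WithLp.toLp 2 u, WithLp.toLp 2 v⟫_𝕜‖ ^ 2 : ℝ) : 𝕜) := by
  rw [EuclideanSpace.inner_toLp_toLp, dotProduct_comm v, vecMulVec_mulVec, op_smul_eq_smul,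
    dotProduct_smul, smul_eq_mul, star_dotProduct, RCLike.ofReal_pow, ← RCLike.conj_mul,
    RCLike.star_def, RCLike.conj_conj, mul_comm]

theorem posSemidef_one_sub_sum_smul_vecMulVec [Fintype ι] [DecidableEq n] {ψ : ι → n → 𝕜}
    {C : ℝ} (hC : 0 < C)
    (hψ : ∀ v : EuclideanSpace 𝕜 n, ∑ x, ‖⟪WithLp.toLp 2 (ψ x), v⟫_𝕜‖ ^ 2 ≤ C * ‖v‖ ^ 2) :
    (1 - ∑ x, ((C⁻¹ : ℝ) : 𝕜) • vecMulVec (ψ x) (star (ψ x))).PosSemidef := by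
  have hP : (∑ x, ((C⁻¹ : ℝ) : 𝕜) • vecMulVec (ψ x) (star (ψ x))).PosSemidef :=
    posSemidef_sum _ fun x _ =>
      (posSemidef_vecMulVec_self_star _).smul (RCLike.ofReal_nonneg.mpr (by positivity))
  refine .of_dotProduct_mulVec_nonneg (isHermitian_one.sub hP.isHermitian) fun v => ?_
  have hnorm : star v ⬝ᵥ v = ((‖WithLp.toLp 2 v‖ ^ 2 : ℝ) : 𝕜) := by
    rw [RCLike.ofReal_pow, ← inner_self_eq_norm_sq_to_K, EuclideanSpace.inner_toLp_toLp,
      dotProduct_comm]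
  rw [sub_mulVec, one_mulVec, dotProduct_sub, sum_mulVec, dotProduct_sum, sub_nonneg, hnorm]
  simp only [smul_mulVec, dotProduct_smul, star_dotProduct_vecMulVec_mulVec, smul_eq_mul,
    ← RCLike.ofReal_mul, ← RCLike.ofReal_sum, RCLike.ofReal_le_ofReal, ← Finset.mul_sum]
  rw [inv_mul_le_iff₀ hC]
  exact hψ _

end Matrices

section Steering

variable {A X : Type*} [Fintype A] [Fintype X] [DecidableEq A] [DecidableEq X] {n : ℕ}

theorem unsteerable_const {ν : A → Matrix (Fin n) (Fin n) ℂ} (hν : ∀ a, (ν a).PosSemidef) :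
    Unsteerable (fun a (_ : X) => ν a) := by
  refine ⟨fun f => ∑ b, if f = fun _ => b then ν b else 0,
    fun f => posSemidef_sum _ fun b _ => ?_, fun a x => ?_⟩
  · split_ifs
    exacts [hν b, .zero]
  · have hswap : ∀ f : X → A, (if a = f x then ∑ b, (if f = fun _ => b then ν b else 0) else 0)
        = ∑ b, if a = f x then (if f = fun _ => b then ν b else 0) else 0 := fun f => by
      rw [Finset.sum_ite_irrel, Finset.sum_const_zero]
    simp only [hswap]
    rw [Finset.sum_comm]
    simp only [← ite_and, and_comm (a := a = _)]
    simp [ite_and, Finset.sum_ite_eq']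

theorem Unsteerable.re_sum_trace_mul_le [Nonempty X] {μ : A → X → Matrix (Fin n) (Fin n) ℂ}
    (hμ : Unsteerable μ) (hnorm : ∀ x, (∑ a, μ a x).trace = 1)
    {F : A → X → Matrix (Fin n) (Fin n) ℂ} (hF : ∀ f : X → A, (1 - ∑ x, F (f x) x).PosSemidef) :
    (∑ a, ∑ x, (F a x * μ a x).trace).re ≤ 1 := by
  obtain ⟨σ, hσ, hμσ⟩ := hμ
  have hsum : ∑ a, ∑ x, F a x * μ a x = ∑ f : X → A, (∑ x, F (f x) x) * σ f := by
    simp only [hμσ, Finset.mul_sum, mul_ite, mul_zero, Finset.sum_comm (γ := A),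
      Finset.sum_ite_eq', Finset.mem_univ, ↓reduceIte, Finset.sum_mul]
    rw [Finset.sum_comm]
  have hmass : ∑ f : X → A, σ f = ∑ a, μ a (Classical.arbitrary X) := by
    simp [hμσ, Finset.sum_comm (γ := A)]
  have hle : ∑ a, ∑ x, (F a x * μ a x).trace ≤ 1 :=
    calc ∑ a, ∑ x, (F a x * μ a x).trace = ∑ f : X → A, ((∑ x, F (f x) x) * σ f).trace := by
          simp only [← trace_sum, hsum]
      _ ≤ ∑ f : X → A, (σ f).trace := Finset.sum_le_sum fun f _ => by
          simpa [sub_mul] using (hF f).trace_mul_nonneg_s17 (hσ f)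
      _ = 1 := by rw [← trace_sum, hmass, hnorm]
  simpa using (Complex.le_def.mp hle).1

theorem re_sum_trace_mul_le_one_add [Nonempty X] {ρ τ F : A → X → Matrix (Fin n) (Fin n) ℂ}
    (hρ : ∀ x, (∑ a, ρ a x).trace = 1) (hF : ∀ a x, (F a x).PosSemidef)
    (hF₁ : ∀ f : X → A, (1 - ∑ x, F (f x) x).PosSemidef) {t : ℝ} (ht : 0 ≤ t)
    (hτ : IsAssemblage τ)
    (hU : Unsteerable fun a x => (((1 + t)⁻¹ : ℝ) : ℂ) • (ρ a x + ((t : ℝ) : ℂ) • τ a x)) :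
    (∑ a, ∑ x, (F a x * ρ a x).trace).re ≤ 1 + t := by
  have hnorm :
      ∀ x, (∑ a, (((1 + t)⁻¹ : ℝ) : ℂ) • (ρ a x + ((t : ℝ) : ℂ) • τ a x)).trace = 1 := by
    intro x
    rw [← Finset.smul_sum, Finset.sum_add_distrib, ← Finset.smul_sum, trace_smul, trace_add,
      trace_smul, hρ, hτ.2.2, smul_eq_mul, smul_eq_mul, mul_one]
    push_cast
    field_simp
  have hmix := hU.re_sum_trace_mul_le hnorm hF₁
  have hτF : 0 ≤ (∑ a, ∑ x, (F a x * τ a x).trace).re :=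
    (Complex.nonneg_iff.mp (Finset.sum_nonneg fun a _ => Finset.sum_nonneg fun x _ =>
      (hF a x).trace_mul_nonneg_s17 (hτ.1 a x))).1
  simp only [mul_smul_comm, mul_add, trace_smul, trace_add, smul_eq_mul, ← Finset.mul_sum,
    Finset.sum_add_distrib] at hmix
  rw [Complex.add_re, Complex.re_ofReal_mul, Complex.re_ofReal_mul, Complex.re_ofReal_mul,
    ← mul_add, inv_mul_le_iff₀ (by positivity), mul_one] at hmix
  nlinarith

/-- Mixing with `τ_{a|x} = N⁻¹ (Σ_{b ≠ a} ρ_{b|x} + N⁻¹ ρ_B)`, `N = |A|`, at weight `t = N`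
washes out the outcome: the mixture is `N⁻¹ ρ_B`. -/
theorem IsAssemblage.exists_unsteerable_mixture [Nonempty X]
    {ρ : A → X → Matrix (Fin n) (Fin n) ℂ} (hρ : IsAssemblage ρ) :
    ∃ t : ℝ, 0 ≤ t ∧ ∃ τ : A → X → Matrix (Fin n) (Fin n) ℂ, IsAssemblage τ ∧
      Unsteerable fun a x => (((1 + t)⁻¹ : ℝ) : ℂ) • (ρ a x + ((t : ℝ) : ℂ) • τ a x) := by
  obtain ⟨hpsd, hsame, htr⟩ := hρ
  set N := Fintype.card A
  set x₀ := Classical.arbitrary X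
  have hN : (N : ℂ) ≠ 0 := by
    have : N ≠ 0 := fun h => by simpa [Fintype.card_eq_zero_iff.mp h] using htr x₀
    exact_mod_cast this
  set τ : A → X → Matrix (Fin n) (Fin n) ℂ := fun a x =>
    (((N : ℝ)⁻¹ : ℝ) : ℂ) • (∑ b, ρ b x - ρ a x + (((N : ℝ)⁻¹ : ℝ) : ℂ) • ∑ b, ρ b x)
  have hτsum : ∀ x, ∑ a, τ a x = ∑ b, ρ b x := by
    intro x
    simp only [τ, ← Finset.smul_sum, Finset.sum_add_distrib, Finset.sum_sub_distrib,
      Finset.sum_const, Finset.card_univ, ← Nat.cast_smul_eq_nsmul ℂ]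
    match_scalars
    field_simp
    ring
  have hmix : ∀ a x, (((1 + N)⁻¹ : ℝ) : ℂ) • (ρ a x + ((N : ℝ) : ℂ) • τ a x)
      = (((N : ℝ)⁻¹ : ℝ) : ℂ) • ∑ b, ρ b x₀ := by
    intro a x
    rw [← hsame x x₀]
    simp only [τ]
    match_scalars <;> field_simp <;> ring
  refine ⟨N, N.cast_nonneg, τ, ⟨fun a x => ?_, fun x x' => ?_, fun x => ?_⟩, ?_⟩
  · have hrest : (∑ b, ρ b x - ρ a x).PosSemidef := by
      rw [← Finset.sum_erase_eq_sub (Finset.mem_univ a)]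
      exact posSemidef_sum _ fun b _ => hpsd b x
    have hinv : (0 : ℂ) ≤ ((N⁻¹ : ℝ) : ℂ) := Complex.zero_le_real.mpr (by positivity)
    exact (hrest.add ((posSemidef_sum _ fun b _ => hpsd b x).smul hinv)).smul hinv
  · rw [hτsum, hτsum, hsame]
  · rw [hτsum, htr]
  · simp only [hmix]
    exact unsteerable_const fun _ => (posSemidef_sum _ fun b _ => hpsd b x₀).smul
      (Complex.zero_le_real.mpr (by positivity))

theorem IsAssemblage.re_sum_trace_mul_sub_one_le_steeringRobustness [Nonempty X]
    {ρ F : A → X → Matrix (Fin n) (Fin n) ℂ} (hρ : IsAssemblage ρ)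
    (hF : ∀ a x, (F a x).PosSemidef) (hF₁ : ∀ f : X → A, (1 - ∑ x, F (f x) x).PosSemidef) :
    (∑ a, ∑ x, (F a x * ρ a x).trace).re - 1 ≤ SteeringRobustness ρ := by
  obtain ⟨t, ht, τ, hτ, hU⟩ := hρ.exists_unsteerable_mixture
  refine le_csInf ⟨t, ht, τ, hτ, hU⟩ ?_
  rintro s ⟨hs, τ, hτ, hU⟩
  linarith [re_sum_trace_mul_le_one_add hρ.2.2 hF hF₁ hs hτ hU]

end Steering

section MutuallyUnbiased

variable {d : ℕ}

theorem isAssemblage_inv_smul_vecMulVec {X : Type*} (hd : 0 < d) {ψ : Fin d → X → Fin d → ℂ}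
    (horth : ∀ x a b, star (ψ a x) ⬝ᵥ ψ b x = if a = b then 1 else 0) :
    IsAssemblage fun a x => (((d : ℝ)⁻¹ : ℝ) : ℂ) • vecMulVec (ψ a x) (star (ψ a x)) := by
  have hsum : ∀ x, ∑ a, (((d : ℝ)⁻¹ : ℝ) : ℂ) • vecMulVec (ψ a x) (star (ψ a x))
      = (((d : ℝ)⁻¹ : ℝ) : ℂ) • 1 := fun x => by
    rw [← Finset.smul_sum, sum_vecMulVec_eq_one (horth x)]
  refine ⟨fun a x => (posSemidef_vecMulVec_self_star _).smul
    (Complex.zero_le_real.mpr (by positivity)), fun x x' => by rw [hsum, hsum], fun x => ?_⟩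
  rw [hsum, trace_smul, trace_one, Fintype.card_fin, smul_eq_mul]
  push_cast
  field_simp

variable {ψ : Fin d → Fin (d + 1) → Fin d → ℂ}

theorem posSemidef_one_sub_sum_smul_vecMulVec_of_unbiased
    (horth : ∀ x a b, star (ψ a x) ⬝ᵥ ψ b x = if a = b then 1 else 0)
    (hmub : ∀ (x y : Fin (d + 1)) (a b : Fin d), x ≠ y →
      ‖star (ψ a x) ⬝ᵥ ψ b y‖ = 1 / Real.sqrt d)
    (f : Fin (d + 1) → Fin d) :
    (1 - ∑ x, (((Real.sqrt d + 1)⁻¹ : ℝ) : ℂ) •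
      vecMulVec (ψ (f x) x) (star (ψ (f x) x))).PosSemidef := by
  have hC :
      1 + ((Fintype.card (Fin (d + 1)) : ℝ) - 1) * (1 / Real.sqrt d) = Real.sqrt d + 1 := by
    rw [Fintype.card_fin, Nat.cast_add_one, add_sub_cancel_right, mul_one_div, Real.div_sqrt,
      add_comm]
  refine posSemidef_one_sub_sum_smul_vecMulVec (by positivity)
    (sum_norm_inner_sq_le_of_norm_sum_smul_sq_le (by positivity) (hC ▸ ?_))
  refine norm_sum_smul_sq_le_of_norm_inner_le (by positivity)
    (fun x => norm_toLp_eq_one_of_star_dotProduct_self (by simpa using horth x (f x) (f x)))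
    fun x y hxy => ?_
  rw [EuclideanSpace.inner_toLp_toLp, dotProduct_comm, hmub x y _ _ hxy]

theorem re_sum_trace_smul_vecMulVec_mul_smul_vecMulVec (hd : 0 < d)
    (horth : ∀ x a b, star (ψ a x) ⬝ᵥ ψ b x = if a = b then 1 else 0) :
    (∑ a, ∑ x, ((((Real.sqrt d + 1)⁻¹ : ℝ) : ℂ) • vecMulVec (ψ a x) (star (ψ a x)) *
      ((((d : ℝ)⁻¹ : ℝ) : ℂ) • vecMulVec (ψ a x) (star (ψ a x)))).trace).re
      = ((d : ℝ) + 1) / (Real.sqrt d + 1) := by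
  have hP : ∀ a x, (vecMulVec (ψ a x) (star (ψ a x)) * vecMulVec (ψ a x) (star (ψ a x))).trace
      = 1 := fun a x => trace_vecMulVec_mul_self (by simpa using horth x a a)
  simp only [smul_mul_smul_comm, trace_smul, hP, smul_eq_mul, mul_one, Finset.sum_const,
    Finset.card_univ, Fintype.card_fin, nsmul_eq_mul]
  rw [← Complex.ofReal_natCast, ← Complex.ofReal_natCast, ← Complex.ofReal_mul,
    ← Complex.ofReal_mul, ← Complex.ofReal_mul, Complex.ofReal_re]
  field_simp
  push_cast
  ring

end MutuallyUnbiased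

/-- For the assemblage built from `d+1` mutually unbiased bases,
`ρ_{a|x} = (1/d)|ψ_{a|x}⟩⟨ψ_{a|x}|`, the steering robustness is at least
`√d(√d−1)/(√d+1) ≥ √d − 2`; moreover `F_{a|x} = (1/(√d+1))|ψ_{a|x}⟩⟨ψ_{a|x}|`
is dual feasible and achieves objective value `(d+1)/(√d+1)`. -/
theorem mub_assemblage_robustness_lower_bound
    {d : ℕ} (hd : 0 < d)
    (ψ : Fin d → Fin (d + 1) → (Fin d → ℂ))
    (horth : ∀ x a b, star (ψ a x) ⬝ᵥ ψ b x = if a = b then 1 else 0)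
    (hmub : ∀ (x y : Fin (d + 1)) (a b : Fin d), x ≠ y →
      ‖star (ψ a x) ⬝ᵥ ψ b y‖ = 1 / Real.sqrt d) :
    SteeringRobustness (fun (a : Fin d) (x : Fin (d + 1)) =>
        (((d : ℝ)⁻¹ : ℝ) : ℂ) • Matrix.vecMulVec (ψ a x) (star (ψ a x)))
      ≥ Real.sqrt d * (Real.sqrt d - 1) / (Real.sqrt d + 1) ∧
    Real.sqrt d * (Real.sqrt d - 1) / (Real.sqrt d + 1) ≥ Real.sqrt d - 2 ∧
    (∀ a x, ((((Real.sqrt d + 1)⁻¹ : ℝ) : ℂ) •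
        Matrix.vecMulVec (ψ a x) (star (ψ a x))).PosSemidef) ∧
    (∀ f : Fin (d + 1) → Fin d,
      ((1 : Matrix (Fin d) (Fin d) ℂ) -
        ∑ x, ∑ a, if a = f x then
          (((Real.sqrt d + 1)⁻¹ : ℝ) : ℂ) •
            Matrix.vecMulVec (ψ a x) (star (ψ a x)) else 0).PosSemidef) ∧
    (∑ a, ∑ x,
        (((((Real.sqrt d + 1)⁻¹ : ℝ) : ℂ) •
            Matrix.vecMulVec (ψ a x) (star (ψ a x))) *
          ((((d : ℝ)⁻¹ : ℝ) : ℂ) •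
            Matrix.vecMulVec (ψ a x) (star (ψ a x)))).trace).re
      = ((d : ℝ) + 1) / (Real.sqrt d + 1) := by
  have hsqrt : Real.sqrt d * Real.sqrt d = d := Real.mul_self_sqrt d.cast_nonneg
  have hF : ∀ a x,
      ((((Real.sqrt d + 1)⁻¹ : ℝ) : ℂ) • vecMulVec (ψ a x) (star (ψ a x))).PosSemidef :=
    fun a x => (posSemidef_vecMulVec_self_star _).smul (Complex.zero_le_real.mpr (by positivity))
  have hF₁ := posSemidef_one_sub_sum_smul_vecMulVec_of_unbiased horth hmub
  have hobj := re_sum_trace_smul_vecMulVec_mul_smul_vecMulVec hd horth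
  have hR := IsAssemblage.re_sum_trace_mul_sub_one_le_steeringRobustness
    (isAssemblage_inv_smul_vecMulVec hd horth) hF hF₁
  refine ⟨?_, ?_, hF, fun f => by simpa using hF₁ f, hobj⟩
  · rw [hobj] at hR
    convert hR using 1
    field_simp
    linear_combination hsqrt
  · rw [ge_iff_le, le_div_iff₀ (by positivity)]
    nlinarith [Real.sqrt_nonneg d]
end
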